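/- For each η ≥ 2 define V_N(η) = sInf { Q_DC(MSE_N^η(ν), PA_N^η(ν)) : ν a best response among N-node strategies at threshold η }, and V_2(η) analogously for 2-node strategies. Assume that for every η ≥ 2 and every a ∈ (0,1] the constrained optima c_η^N(a) and c_η^2(a) are attained by some strategies with acceptance probability at least a, and that best responses exist at every threshold η in both games. Then V_N(η) = V_2(η) for all η ≥ 2, and consequently a threshold η₀ ≥ 2 maximizes V_N over [2, ∞) if and only if it maximizes V_2 over [2, ∞) (i.e., the data collector's optimal threshold is the same regardless of the number of adversarial nodes). -/

import Mathlib

open MeasureTheory ProbabilityTheory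

noncomputable section

def midN (N : ℕ) (p : ℝ × (Fin (N-1) → ℝ)) : ℝ :=
  (max p.1 (⨆ i, p.2 i) + min p.1 (⨅ i, p.2 i)) / 2

def accN (N : ℕ) (η Δ : ℝ) : Set (ℝ × (Fin (N-1) → ℝ)) :=
  {p | max p.1 (⨆ i, p.2 i) - min p.1 (⨅ i, p.2 i) ≤ η * Δ}

def PA_N (N : ℕ) (η Δ : ℝ) (μ : Measure ℝ) (ν : Measure (Fin (N-1) → ℝ)) : ℝ :=
  ((μ.prod ν) (accN N η Δ)).toReal

def MSE_N (N : ℕ) (η Δ : ℝ) (μ : Measure ℝ) (ν : Measure (Fin (N-1) → ℝ)) : ℝ :=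
  ∫ p, (midN N p) ^ 2 ∂((μ.prod ν)[|accN N η Δ])

def mid2 (p : ℝ × ℝ) : ℝ := (max p.1 p.2 + min p.1 p.2) / 2

def acc2 (η Δ : ℝ) : Set (ℝ × ℝ) := {p | max p.1 p.2 - min p.1 p.2 ≤ η * Δ}

def PA_2 (η Δ : ℝ) (μ κ : Measure ℝ) : ℝ := ((μ.prod κ) (acc2 η Δ)).toReal

def MSE_2 (η Δ : ℝ) (μ κ : Measure ℝ) : ℝ :=
  ∫ p, (mid2 p) ^ 2 ∂((μ.prod κ)[|acc2 η Δ])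

def cN (N : ℕ) (η Δ : ℝ) (μ : Measure ℝ) (α : ℝ) : ℝ :=
  sSup {r | ∃ ν : Measure (Fin (N-1) → ℝ), IsProbabilityMeasure ν ∧
    α ≤ PA_N N η Δ μ ν ∧ r = MSE_N N η Δ μ ν}

def c2 (η Δ : ℝ) (μ : Measure ℝ) (α : ℝ) : ℝ :=
  sSup {r | ∃ κ : Measure ℝ, IsProbabilityMeasure κ ∧
    α ≤ PA_2 η Δ μ κ ∧ r = MSE_2 η Δ μ κ}

def IsBestResponseN (N : ℕ) (η Δ : ℝ) (μ : Measure ℝ) (QAD : ℝ → ℝ → ℝ)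
    (ν : Measure (Fin (N-1) → ℝ)) : Prop :=
  IsProbabilityMeasure ν ∧ 0 < PA_N N η Δ μ ν ∧
    ∀ ν' : Measure (Fin (N-1) → ℝ), IsProbabilityMeasure ν' → 0 < PA_N N η Δ μ ν' →
      QAD (MSE_N N η Δ μ ν') (PA_N N η Δ μ ν') ≤ QAD (MSE_N N η Δ μ ν) (PA_N N η Δ μ ν)

def IsBestResponse2 (η Δ : ℝ) (μ : Measure ℝ) (QAD : ℝ → ℝ → ℝ) (κ : Measure ℝ) : Prop :=
  IsProbabilityMeasure κ ∧ 0 < PA_2 η Δ μ κ ∧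
    ∀ κ' : Measure ℝ, IsProbabilityMeasure κ' → 0 < PA_2 η Δ μ κ' →
      QAD (MSE_2 η Δ μ κ') (PA_2 η Δ μ κ') ≤ QAD (MSE_2 η Δ μ κ) (PA_2 η Δ μ κ)

/-! An adversary with N − 1 nodes gains nothing over one with a single node. Given the range
[m, M] of the N − 1 reports, a single report t can be chosen so that, for every honest value in
[−Δ, Δ], the pair (n, t) is accepted exactly when the full profile is, and the midpoint of (n, t)
is at least as far from 0 as the midpoint of the profile. Hence collapsing an N-node strategy keeps
its acceptance probability and does not lower its MSE, while a 2-node strategy is an N-node one in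
which all adversarial nodes report the same value. So the two games have the same best-response
payoff, and their best responses produce the same set of outcomes (MSE, PA). -/

lemma ProbabilityTheory.cond_map_of_ae_eq {α β : Type*} [MeasurableSpace α] [MeasurableSpace β]
    {P : Measure α} {F : α → β} (hF : Measurable F) {s : Set α} {t : Set β}
    (ht : MeasurableSet t) (hst : s =ᵐ[P] F ⁻¹' t) : (P.map F)[|t] = (P[|s]).map F := by
  rw [ProbabilityTheory.cond, ProbabilityTheory.cond, Measure.map_apply hF ht,
    Measure.restrict_map hF ht, measure_congr hst, Measure.restrict_congr_set hst,
    Measure.map_smul]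

lemma MeasureTheory.Measure.prod_map_right {α β γ : Type*} [MeasurableSpace α]
    [MeasurableSpace β] [MeasurableSpace γ] (μ : Measure α) (ν : Measure β) [SFinite μ]
    [SFinite ν] {f : β → γ} (hf : Measurable f) :
    μ.prod (ν.map f) = (μ.prod ν).map (Prod.map id f) := by
  rw [← Measure.map_prod_map μ ν measurable_id hf, Measure.map_id]

lemma sq_mid_le_of_max_sub_min_le {n t c Δ : ℝ} (hn : n ∈ Set.Icc (-Δ) Δ)
    (h : max n t - min n t ≤ c) : ((max n t + min n t) / 2) ^ 2 ≤ (Δ + c) ^ 2 := by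
  rw [max_sub_min_eq_abs, abs_le] at h
  rw [max_add_min]
  obtain ⟨hn₁, hn₂⟩ := hn
  apply sq_le_sq' <;> linarith

/-- The single report replacing reports with range `[m, M]`. A spread above `η * Δ` is always
rejected, and so is `(η + 2) * Δ`, which is more than `η * Δ` away from `[-Δ, Δ]`. Otherwise the
extreme farther from `0` is accepted exactly when the whole range is (as `η ≥ 2`), and it pushes the
midpoint away from `0`. -/
def collapseReport (η Δ m M : ℝ) : ℝ :=
  if η * Δ < M - m then (η + 2) * Δ else if 0 ≤ M + m then M else m

section collapseReport

variable {η Δ m M n : ℝ}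

lemma accept_collapseReport_iff (hΔ : 0 < Δ) (hη : 2 ≤ η) (hmM : m ≤ M)
    (hn : n ∈ Set.Icc (-Δ) Δ) :
    max n (collapseReport η Δ m M) - min n (collapseReport η Δ m M) ≤ η * Δ ↔
      max n M - min n m ≤ η * Δ := by
  have : 2 * Δ ≤ η * Δ := by nlinarith
  obtain ⟨hn₁, hn₂⟩ := hn
  rw [max_sub_min_eq_abs, abs_le]
  unfold collapseReport
  split_ifs with hspread hsign <;>
    rcases le_total n m with h₁ | h₁ <;> rcases le_total n M with h₂ | h₂ <;>
    simp only [max_eq_left, max_eq_right, min_eq_left, min_eq_right, h₁, h₂] <;>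
    constructor <;> intro h <;> first | (constructor <;> linarith) | linarith

lemma sq_mid_le_sq_mid_collapseReport (hmM : m ≤ M) (hacc : max n M - min n m ≤ η * Δ) :
    ((max n M + min n m) / 2) ^ 2 ≤
      ((max n (collapseReport η Δ m M) + min n (collapseReport η Δ m M)) / 2) ^ 2 := by
  rw [max_add_min]
  unfold collapseReport
  split_ifs with hspread hsign <;>
    rcases le_total n m with h₁ | h₁ <;> rcases le_total n M with h₂ | h₂ <;>
    simp only [max_eq_left, max_eq_right, min_eq_left, min_eq_right, h₁, h₂] at hacc ⊢ <;>
    first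
    | (exfalso; linarith)
    | (apply sq_le_sq' <;> linarith)
    | (rw [← neg_sq ((n + _) / 2), ← neg_sq ((_ + _) / 2)]; apply sq_le_sq' <;> linarith)
    | (apply le_of_eq; ring)

end collapseReport

lemma measurable_midN (N : ℕ) : Measurable (midN N) := by
  unfold midN; fun_prop

lemma measurableSet_accN (N : ℕ) (η Δ : ℝ) : MeasurableSet (accN N η Δ) :=
  measurableSet_le (by fun_prop) measurable_const

lemma measurable_mid2 : Measurable mid2 := by
  unfold mid2; fun_prop

lemma measurableSet_acc2 (η Δ : ℝ) : MeasurableSet (acc2 η Δ) :=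
  measurableSet_le (by fun_prop) measurable_const

def collapseMap {ι : Type*} (η Δ : ℝ) (x : ι → ℝ) : ℝ :=
  collapseReport η Δ (⨅ i, x i) (⨆ i, x i)

lemma measurable_collapseMap {ι : Type*} [Countable ι] (η Δ : ℝ) :
    Measurable (collapseMap (ι := ι) η Δ) := by
  have hsup : Measurable fun x : ι → ℝ => ⨆ i, x i := .iSup measurable_pi_apply
  have hinf : Measurable fun x : ι → ℝ => ⨅ i, x i := .iInf measurable_pi_apply
  exact Measurable.ite (measurableSet_lt measurable_const (hsup.sub hinf)) measurable_const
    (Measurable.ite (measurableSet_le measurable_const (hsup.add hinf)) hsup hinf)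

section collapse

variable {N : ℕ} {η Δ : ℝ} {μ : Measure ℝ} {ν : Measure (Fin (N-1) → ℝ)}

lemma iInf_le_iSup_of_two_le (hN : 2 ≤ N) (x : Fin (N-1) → ℝ) : ⨅ i, x i ≤ ⨆ i, x i := by
  have : Nonempty (Fin (N-1)) := ⟨⟨0, by omega⟩⟩
  exact ciInf_le_ciSup (Set.finite_range x).bddBelow (Set.finite_range x).bddAbove

lemma mem_acc2_collapseMap_iff (hN : 2 ≤ N) (hΔ : 0 < Δ) (hη : 2 ≤ η)
    {p : ℝ × (Fin (N-1) → ℝ)} (hp : p.1 ∈ Set.Icc (-Δ) Δ) :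
    (p.1, collapseMap η Δ p.2) ∈ acc2 η Δ ↔ p ∈ accN N η Δ :=
  accept_collapseReport_iff hΔ hη (iInf_le_iSup_of_two_le hN p.2) hp

lemma accN_ae_eq_preimage_acc2_collapseMap (hN : 2 ≤ N) (hΔ : 0 < Δ) (hη : 2 ≤ η)
    (hμ : ∀ᵐ n ∂μ, n ∈ Set.Icc (-Δ) Δ) [SFinite ν] :
    accN N η Δ =ᵐ[μ.prod ν] Prod.map id (collapseMap η Δ) ⁻¹' acc2 η Δ := by
  filter_upwards [Measure.quasiMeasurePreserving_fst.ae hμ] with p hp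
  exact propext (mem_acc2_collapseMap_iff hN hΔ hη hp).symm

lemma PA_2_map_collapseMap (hN : 2 ≤ N) (hΔ : 0 < Δ) (hη : 2 ≤ η)
    (hμ : ∀ᵐ n ∂μ, n ∈ Set.Icc (-Δ) Δ) [SFinite μ] [SFinite ν] :
    PA_2 η Δ μ (ν.map (collapseMap η Δ)) = PA_N N η Δ μ ν := by
  rw [PA_2, PA_N, Measure.prod_map_right μ ν (measurable_collapseMap η Δ),
    Measure.map_apply (measurable_id.prodMap (measurable_collapseMap η Δ))
      (measurableSet_acc2 η Δ),
    measure_congr (accN_ae_eq_preimage_acc2_collapseMap hN hΔ hη hμ)]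

lemma MSE_N_le_MSE_2_map_collapseMap (hN : 2 ≤ N) (hΔ : 0 < Δ) (hη : 2 ≤ η)
    (hμ : ∀ᵐ n ∂μ, n ∈ Set.Icc (-Δ) Δ) [SFinite μ] [SFinite ν] :
    MSE_N N η Δ μ ν ≤ MSE_2 η Δ μ (ν.map (collapseMap η Δ)) := by
  set F : ℝ × (Fin (N-1) → ℝ) → ℝ × ℝ := Prod.map id (collapseMap η Δ)
  have hF : Measurable F := measurable_id.prodMap (measurable_collapseMap η Δ)
  set P := (μ.prod ν)[|accN N η Δ]
  have hacc := accN_ae_eq_preimage_acc2_collapseMap hN hΔ hη hμ (ν := ν)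
  have hP : ∀ᵐ p ∂P, p.1 ∈ Set.Icc (-Δ) Δ ∧ p ∈ accN N η Δ := by
    filter_upwards [cond_absolutelyContinuous.ae_le (Measure.quasiMeasurePreserving_fst.ae hμ),
      ae_cond_mem (measurableSet_accN N η Δ)] with p h₁ h₂ using ⟨h₁, h₂⟩
  rw [MSE_2, Measure.prod_map_right μ ν (measurable_collapseMap η Δ),
    cond_map_of_ae_eq hF (measurableSet_acc2 η Δ) hacc,
    integral_map hF.aemeasurable (measurable_mid2.pow_const 2).aestronglyMeasurable]
  refine integral_mono_of_nonneg (.of_forall fun p => sq_nonneg _) ?_ ?_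
  · refine Integrable.of_bound
      ((measurable_mid2.comp hF).pow_const 2).aestronglyMeasurable ((Δ + η * Δ) ^ 2) ?_
    filter_upwards [hP] with p hp
    rw [Real.norm_of_nonneg (sq_nonneg _)]
    exact sq_mid_le_of_max_sub_min_le hp.1 ((mem_acc2_collapseMap_iff hN hΔ hη hp.1).2 hp.2)
  · filter_upwards [hP] with p hp
    exact sq_mid_le_sq_mid_collapseReport (iInf_le_iSup_of_two_le hN p.2) hp.2

end collapse

section replicate

variable {N : ℕ} {η Δ : ℝ} {μ : Measure ℝ} {κ : Measure ℝ}

lemma measurable_replicate : Measurable fun t : ℝ => fun _ : Fin (N-1) => t := by fun_prop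

lemma preimage_accN_replicate (hN : 2 ≤ N) :
    Prod.map id (fun t (_ : Fin (N-1)) => t) ⁻¹' accN N η Δ = acc2 η Δ := by
  have : Nonempty (Fin (N-1)) := ⟨⟨0, by omega⟩⟩
  ext p
  simp [accN, acc2]

lemma midN_replicate (hN : 2 ≤ N) (p : ℝ × ℝ) :
    midN N (Prod.map id (fun t (_ : Fin (N-1)) => t) p) = mid2 p := by
  have : Nonempty (Fin (N-1)) := ⟨⟨0, by omega⟩⟩
  simp [midN, mid2]

lemma PA_N_map_replicate (hN : 2 ≤ N) [SFinite μ] [SFinite κ] :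
    PA_N N η Δ μ (κ.map fun t _ => t) = PA_2 η Δ μ κ := by
  rw [PA_N, PA_2, Measure.prod_map_right μ κ measurable_replicate,
    Measure.map_apply (measurable_id.prodMap measurable_replicate) (measurableSet_accN N η Δ),
    preimage_accN_replicate hN]

lemma MSE_N_map_replicate (hN : 2 ≤ N) [SFinite μ] [SFinite κ] :
    MSE_N N η Δ μ (κ.map fun t _ => t) = MSE_2 η Δ μ κ := by
  have hG : Measurable
      (Prod.map id fun t (_ : Fin (N-1)) => t : ℝ × ℝ → ℝ × (Fin (N-1) → ℝ)) :=
    measurable_id.prodMap measurable_replicate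
  rw [MSE_N, MSE_2, Measure.prod_map_right μ κ measurable_replicate,
    cond_map_of_ae_eq hG (measurableSet_accN N η Δ)
      (Filter.EventuallyEq.of_eq (preimage_accN_replicate hN).symm),
    integral_map hG.aemeasurable ((measurable_midN N).pow_const 2).aestronglyMeasurable]
  simp only [midN_replicate hN]

end replicate

section bestResponse

variable {N : ℕ} {η Δ : ℝ} {μ : Measure ℝ} [IsProbabilityMeasure μ] {QAD : ℝ → ℝ → ℝ}

lemma IsBestResponseN.map_collapseMap (hN : 2 ≤ N) (hΔ : 0 < Δ) (hη : 2 ≤ η)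
    (hμ : ∀ᵐ n ∂μ, n ∈ Set.Icc (-Δ) Δ) (hQ : ∀ y, StrictMono fun x => QAD x y)
    {ν : Measure (Fin (N-1) → ℝ)} (hν : IsBestResponseN N η Δ μ QAD ν) :
    IsBestResponse2 η Δ μ QAD (ν.map (collapseMap η Δ)) ∧
      MSE_2 η Δ μ (ν.map (collapseMap η Δ)) = MSE_N N η Δ μ ν := by
  obtain ⟨hprob, hpos, hbest⟩ := hν
  have hPA := PA_2_map_collapseMap hN hΔ hη hμ (ν := ν)
  have hκprob : IsProbabilityMeasure (ν.map (collapseMap η Δ)) :=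
    Measure.isProbabilityMeasure_map (measurable_collapseMap η Δ).aemeasurable
  have hbest₂ : ∀ κ : Measure ℝ, IsProbabilityMeasure κ → 0 < PA_2 η Δ μ κ →
      QAD (MSE_2 η Δ μ κ) (PA_2 η Δ μ κ) ≤ QAD (MSE_N N η Δ μ ν) (PA_N N η Δ μ ν) := by
    intro κ _ hκ
    have := hbest (κ.map fun t _ => t)
      (Measure.isProbabilityMeasure_map measurable_replicate.aemeasurable)
      (by rwa [PA_N_map_replicate hN])
    rwa [PA_N_map_replicate hN, MSE_N_map_replicate hN] at this
  have hgain : QAD (MSE_N N η Δ μ ν) (PA_N N η Δ μ ν) ≤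
      QAD (MSE_2 η Δ μ (ν.map (collapseMap η Δ))) (PA_2 η Δ μ (ν.map (collapseMap η Δ))) :=
    hPA ▸ (hQ _).monotone (MSE_N_le_MSE_2_map_collapseMap hN hΔ hη hμ)
  refine ⟨⟨hκprob, hPA ▸ hpos, fun κ h₁ h₂ => (hbest₂ κ h₁ h₂).trans hgain⟩,
    (hQ (PA_N N η Δ μ ν)).injective ?_⟩
  have hloss := hbest₂ _ hκprob (hPA ▸ hpos)
  rw [hPA] at hloss hgain
  exact le_antisymm hloss hgain

lemma IsBestResponse2.map_replicate (hN : 2 ≤ N) (hΔ : 0 < Δ) (hη : 2 ≤ η)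
    (hμ : ∀ᵐ n ∂μ, n ∈ Set.Icc (-Δ) Δ) (hQ : ∀ y, StrictMono fun x => QAD x y)
    {κ : Measure ℝ} (hκ : IsBestResponse2 η Δ μ QAD κ) :
    IsBestResponseN N η Δ μ QAD (κ.map fun t _ => t) := by
  obtain ⟨hprob, hpos, hbest⟩ := hκ
  refine ⟨Measure.isProbabilityMeasure_map measurable_replicate.aemeasurable,
    by rwa [PA_N_map_replicate hN], fun ν hν hνpos => ?_⟩
  rw [PA_N_map_replicate hN, MSE_N_map_replicate hN]
  have hPA := PA_2_map_collapseMap hN hΔ hη hμ (ν := ν)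
  calc QAD (MSE_N N η Δ μ ν) (PA_N N η Δ μ ν)
      ≤ QAD (MSE_2 η Δ μ (ν.map (collapseMap η Δ))) (PA_2 η Δ μ (ν.map (collapseMap η Δ))) :=
        hPA ▸ (hQ _).monotone (MSE_N_le_MSE_2_map_collapseMap hN hΔ hη hμ)
    _ ≤ QAD (MSE_2 η Δ μ κ) (PA_2 η Δ μ κ) :=
        hbest _ (Measure.isProbabilityMeasure_map (measurable_collapseMap η Δ).aemeasurable)
          (hPA ▸ hνpos)

lemma bestResponse_outcomes_eq (hN : 2 ≤ N) (hΔ : 0 < Δ) (hη : 2 ≤ η)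
    (hμ : ∀ᵐ n ∂μ, n ∈ Set.Icc (-Δ) Δ) (hQ : ∀ y, StrictMono fun x => QAD x y)
    (g : ℝ → ℝ → ℝ) :
    {u : ℝ | ∃ ν : Measure (Fin (N-1) → ℝ),
        IsBestResponseN N η Δ μ QAD ν ∧ u = g (MSE_N N η Δ μ ν) (PA_N N η Δ μ ν)} =
      {u : ℝ | ∃ κ : Measure ℝ,
        IsBestResponse2 η Δ μ QAD κ ∧ u = g (MSE_2 η Δ μ κ) (PA_2 η Δ μ κ)} := by
  ext u
  constructor
  · rintro ⟨ν, hν, rfl⟩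
    have := hν.1
    have hPA := PA_2_map_collapseMap hN hΔ hη hμ (ν := ν)
    obtain ⟨hbr, hMSE⟩ := hν.map_collapseMap hN hΔ hη hμ hQ
    exact ⟨_, hbr, by rw [hMSE, hPA]⟩
  · rintro ⟨κ, hκ, rfl⟩
    have := hκ.1
    exact ⟨_, hκ.map_replicate hN hΔ hη hμ hQ,
      by rw [PA_N_map_replicate hN, MSE_N_map_replicate hN]⟩

end bestResponse

theorem stmt17_general {N : ℕ} (hN : 2 ≤ N) {Δ : ℝ} (hΔ : 0 < Δ)
    (μ : Measure ℝ) [IsProbabilityMeasure μ] (hμ : μ (Set.Icc (-Δ) Δ) = 1)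
    (QAD : ℝ → ℝ → ℝ)
    (hQ1 : ∀ y : ℝ, StrictMono fun x => QAD x y)
    (QDC : ℝ → ℝ → ℝ)
    (VN V2 : ℝ → ℝ)
    (hVN : ∀ η : ℝ, VN η = sInf {u : ℝ | ∃ ν : Measure (Fin (N-1) → ℝ),
      IsBestResponseN N η Δ μ QAD ν ∧ u = QDC (MSE_N N η Δ μ ν) (PA_N N η Δ μ ν)})
    (hV2 : ∀ η : ℝ, V2 η = sInf {u : ℝ | ∃ κ : Measure ℝ,
      IsBestResponse2 η Δ μ QAD κ ∧ u = QDC (MSE_2 η Δ μ κ) (PA_2 η Δ μ κ)}) :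
    (∀ η : ℝ, 2 ≤ η → VN η = V2 η) ∧
      ∀ η₀ : ℝ, 2 ≤ η₀ →
        ((∀ η : ℝ, 2 ≤ η → VN η ≤ VN η₀) ↔ (∀ η : ℝ, 2 ≤ η → V2 η ≤ V2 η₀)) := by
  have hμ' : ∀ᵐ n ∂μ, n ∈ Set.Icc (-Δ) Δ :=
    (ae_iff_measure_eq measurableSet_Icc.nullMeasurableSet).2
      (by rw [measure_univ, ← hμ]; rfl)
  have hV : ∀ η, 2 ≤ η → VN η = V2 η := fun η hη => by
    rw [hVN, hV2, bestResponse_outcomes_eq hN hΔ hη hμ' hQ1]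
  refine ⟨hV, fun η₀ hη₀ => forall₂_congr fun η hη => ?_⟩
  rw [hV η hη, hV η₀ hη₀]

theorem stmt17 {N : ℕ} (hN : 2 ≤ N) {Δ : ℝ} (hΔ : 0 < Δ)
    (μ : Measure ℝ) [IsProbabilityMeasure μ] (hμ : μ (Set.Icc (-Δ) Δ) = 1)
    (QAD : ℝ → ℝ → ℝ)
    (hQ1 : ∀ y : ℝ, StrictMono fun x => QAD x y) (hQ2 : ∀ x : ℝ, StrictMono (QAD x))
    (QDC : ℝ → ℝ → ℝ)
    (hD1 : ∀ y : ℝ, Antitone fun x => QDC x y) (hD2 : ∀ x : ℝ, Monotone (QDC x))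
    (hattN : ∀ η : ℝ, 2 ≤ η → ∀ a : ℝ, 0 < a → a ≤ 1 → ∃ ν : Measure (Fin (N-1) → ℝ),
      IsProbabilityMeasure ν ∧ a ≤ PA_N N η Δ μ ν ∧ MSE_N N η Δ μ ν = cN N η Δ μ a)
    (hatt2 : ∀ η : ℝ, 2 ≤ η → ∀ a : ℝ, 0 < a → a ≤ 1 → ∃ κ : Measure ℝ,
      IsProbabilityMeasure κ ∧ a ≤ PA_2 η Δ μ κ ∧ MSE_2 η Δ μ κ = c2 η Δ μ a)
    (hexN : ∀ η : ℝ, 2 ≤ η → ∃ ν : Measure (Fin (N-1) → ℝ), IsBestResponseN N η Δ μ QAD ν)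
    (hex2 : ∀ η : ℝ, 2 ≤ η → ∃ κ : Measure ℝ, IsBestResponse2 η Δ μ QAD κ)
    (VN V2 : ℝ → ℝ)
    (hVN : ∀ η : ℝ, VN η = sInf {u : ℝ | ∃ ν : Measure (Fin (N-1) → ℝ),
      IsBestResponseN N η Δ μ QAD ν ∧ u = QDC (MSE_N N η Δ μ ν) (PA_N N η Δ μ ν)})
    (hV2 : ∀ η : ℝ, V2 η = sInf {u : ℝ | ∃ κ : Measure ℝ,
      IsBestResponse2 η Δ μ QAD κ ∧ u = QDC (MSE_2 η Δ μ κ) (PA_2 η Δ μ κ)}) :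
    (∀ η : ℝ, 2 ≤ η → VN η = V2 η) ∧
      ∀ η₀ : ℝ, 2 ≤ η₀ →
        ((∀ η : ℝ, 2 ≤ η → VN η ≤ VN η₀) ↔ (∀ η : ℝ, 2 ≤ η → V2 η ≤ V2 η₀)) :=
  stmt17_general hN hΔ μ hμ QAD hQ1 QDC VN V2 hVN hV2
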